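/- (Abstract form of the differentiated equations (2.14)–(2.15), higher order.) Assume in addition that the coercivity hypothesis a_t(v,v) ≥ c‖v‖_H² holds for all t in an open set U ⊆ ℝ^N containing [0,1]^N. For t ∈ U let u(t) ∈ H denote the unique solution of a_t(u(t), v) = ℓ_t(v) for all v ∈ H, and define recursively, for each multi-index α ∈ ℕ^N: w_0(t) := u(t), and for |α| ≥ 1, w_α(t) is the unique element of H satisfying a_t(w_α(t), v) = ℓ_α(v) − Σ_{j=1}^N α_j b_j(w_{α−e_j}(t), v) for all v ∈ H, where ℓ_α := ℓ_i if α = e_i (a unit multi-index) and ℓ_α := 0 if |α| ≥ 2, and where terms with α_j = 0 are omitted. Then each w_α(t) is well defined, the solution map t ↦ u(t) has partial derivatives of all orders on U, and ∂_t^α u(t) = w_α(t) for every multi-index α and every t ∈ U. -/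

import Mathlib

/-!
Read `a_t` as the map `H → H'`, `x ↦ a_t(x, ·)`; by Lax–Milgram it is invertible for `t ∈ U`, so
`w_α(t) := a_t⁻¹ r_α(t)`, with `r_α(t) = ℓ_α(t) - ∑ⱼ αⱼ bⱼ(w_{α-eⱼ}(t), ·)`, solves the recursive
equations. The family `t ↦ a_t` is affine with `∂ᵢ a_t = bᵢ` and operator inversion is
differentiable at invertible operators, so differentiating `a_t w_α(t) = r_α(t)` gives
`a_t ∂ᵢ w_α = ∂ᵢ r_α - bᵢ w_α`. Inductively along the recursion,
`∂ᵢ r_α = ℓ_{α+eᵢ} - ∑ⱼ αⱼ bⱼ w_{α-eⱼ+eᵢ}`, and the Leibniz-type identity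
`∑ⱼ (α+eᵢ)ⱼ bⱼ w_{α+eᵢ-eⱼ} = ∑ⱼ αⱼ bⱼ w_{α-eⱼ+eᵢ} + bᵢ w_α` turns `∂ᵢ r_α - bᵢ w_α` into
`r_{α+eᵢ}`, whence `∂ᵢ w_α = w_{α+eᵢ}`.
-/

open ContinuousLinearMap

section InverseApply

variable {𝕜 E F G : Type*} [NontriviallyNormedField 𝕜]
  [NormedAddCommGroup E] [NormedSpace 𝕜 E] [NormedAddCommGroup F] [NormedSpace 𝕜 F]
  [CompleteSpace F] [NormedAddCommGroup G] [NormedSpace 𝕜 G]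

theorem HasFDerivAt.inverse_apply {A : E → F →L[𝕜] G} {A' : E →L[𝕜] F →L[𝕜] G} {g : E → G}
    {g' : E →L[𝕜] G} {t : E} (hA : HasFDerivAt A A' t) (hAt : (A t).IsInvertible)
    (hg : HasFDerivAt g g' t) :
    HasFDerivAt (fun s ↦ (A s).inverse (g s))
      ((A t).inverse ∘L (g' - A'.flip ((A t).inverse (g t)))) t := by
  obtain ⟨e, he⟩ := hAt
  -- Composing with `e.symm` moves the problem to the Banach algebra `F →L F`,
  -- where `A t` becomes `1` and `Ring.inverse` has a known derivative.
  have hT := (hasFDerivAt_const (e.symm : G →L[𝕜] F) t).clm_comp hA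
  have hTt : (e.symm : G →L[𝕜] F) ∘L A t = ((1 : (F →L[𝕜] F)ˣ) : F →L[𝕜] F) := by
    rw [← he]; ext; simp
  have hR := hasFDerivAt_ringInverse (𝕜 := 𝕜) (1 : (F →L[𝕜] F)ˣ)
  rw [← hTt] at hR
  simp only [inverse_eq_ringInverse e]
  refine (((hR.comp t hT).clm_comp (hasFDerivAt_const _ t)).clm_apply hg).congr_fderiv ?_
  ext d
  simp [hTt, sub_eq_add_neg]

end InverseApply

theorem IsCoercive.isInvertible {V : Type*} [NormedAddCommGroup V] [InnerProductSpace ℝ V]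
    [CompleteSpace V] {B : V →L[ℝ] V →L[ℝ] ℝ} (hB : IsCoercive B) : B.IsInvertible :=
  ⟨hB.continuousLinearEquivOfBilin.trans (InnerProductSpace.toDual ℝ V).toContinuousLinearEquiv,
    by ext v w; simp [InnerProductSpace.toDual_apply_apply]⟩

section PiRing

variable {𝕜 E ι : Type*} [NontriviallyNormedField 𝕜] [CompleteSpace 𝕜]
  [NormedAddCommGroup E] [NormedSpace 𝕜 E] [Fintype ι] [DecidableEq ι]

theorem ContinuousLinearEquiv.piRing_symm_apply (g : ι → E) (s : ι → 𝕜) :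
    (ContinuousLinearEquiv.piRing (𝕜 := 𝕜) ι).symm g s = ∑ i, s i • g i :=
  LinearEquiv.piRing_symm_apply (S := 𝕜) g s

theorem ContinuousLinearMap.eq_piRing_symm_iff {D : (ι → 𝕜) →L[𝕜] E} {g : ι → E} :
    D = (ContinuousLinearEquiv.piRing (𝕜 := 𝕜) ι).symm g ↔ ∀ i, D (Pi.single i 1) = g i := by
  rw [eq_comm, ContinuousLinearEquiv.symm_apply_eq, funext_iff]
  exact forall_congr' fun _ ↦ eq_comm

@[simp]
theorem ContinuousLinearEquiv.piRing_symm_apply_single (g : ι → E) (i : ι) :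
    (ContinuousLinearEquiv.piRing (𝕜 := 𝕜) ι).symm g (Pi.single i 1) = g i :=
  ContinuousLinearMap.eq_piRing_symm_iff.1 rfl i

theorem hasFDerivAt_const_add_sum_smul (x₀ : E) (x : ι → E) (t : ι → 𝕜) :
    HasFDerivAt (fun s : ι → 𝕜 ↦ x₀ + ∑ i, s i • x i)
      ((ContinuousLinearEquiv.piRing (𝕜 := 𝕜) ι).symm x) t := by
  simp only [← ContinuousLinearEquiv.piRing_symm_apply]
  exact ((ContinuousLinearEquiv.piRing (𝕜 := 𝕜) ι).symm x).hasFDerivAt.const_add x₀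

end PiRing

namespace Pi

variable {ι : Type*} [DecidableEq ι] {α : ι → ℕ} {i j k : ι}

theorem single_one_le_of_ne_zero (h : α j ≠ 0) : Pi.single j 1 ≤ α := by
  intro k
  rcases eq_or_ne k j with rfl | hk
  · simpa [Nat.one_le_iff_ne_zero] using h
  · simp [hk]

theorem sum_tsub_single_one_lt [Fintype ι] (h : α j ≠ 0) :
    ∑ k, (α - Pi.single j 1 : ι → ℕ) k < ∑ k, α k := by
  have hsum := congrArg (fun β : ι → ℕ ↦ ∑ k, β k)
    (tsub_add_cancel_of_le (single_one_le_of_ne_zero h))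
  simp only [Pi.add_apply, Finset.sum_add_distrib, Finset.sum_pi_single', Finset.mem_univ,
    if_true] at hsum
  omega

theorem add_single_one_eq_single_one_iff :
    α + Pi.single i 1 = Pi.single k 1 ↔ α = 0 ∧ i = k := by
  refine ⟨fun h ↦ ?_, fun ⟨hα, hik⟩ ↦ by simp [hα, hik]⟩
  obtain rfl : i = k := by
    by_contra hik
    simpa [hik] using congrFun h i
  simpa using h

theorem sum_natCast_smul_add_single_one [Fintype ι] {R M : Type*} [Semiring R]
    [AddCommMonoid M] [Module R M] (f : ι → (ι → ℕ) → M) (α : ι → ℕ) (i : ι) :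
    ∑ j, ((α + Pi.single i 1 : ι → ℕ) j : R) • f j (α + Pi.single i 1 - Pi.single j 1)
      = ∑ j, (α j : R) • f j (α - Pi.single j 1 + Pi.single i 1) + f i α := by
  have hterm : ∀ j,
      ((α + Pi.single i 1 : ι → ℕ) j : R) • f j (α + Pi.single i 1 - Pi.single j 1)
        = (α j : R) • f j (α - Pi.single j 1 + Pi.single i 1) + if j = i then f i α else 0 := by
    intro j
    rcases eq_or_ne j i with rfl | hji
    · by_cases hj : α j = 0
      · simp [hj]
      · simp [tsub_add_cancel_of_le (single_one_le_of_ne_zero hj), add_smul]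
    · by_cases hj : α j = 0
      · simp [hj, hji]
      · simp [tsub_add_eq_add_tsub (single_one_le_of_ne_zero hj), hji]
  simp only [hterm, Finset.sum_add_distrib, Finset.sum_ite_eq', Finset.mem_univ, if_true]

end Pi

noncomputable section

namespace ParametricLaxMilgram

variable {H ι : Type*} [NormedAddCommGroup H] [NormedSpace ℝ H] [Fintype ι]
  (b₀ : H →L[ℝ] H →L[ℝ] ℝ) (b : ι → H →L[ℝ] H →L[ℝ] ℝ)

def form (t : ι → ℝ) : H →L[ℝ] H →L[ℝ] ℝ := b₀ + ∑ i, t i • b i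

variable {b₀ b}

@[simp]
theorem form_apply_apply (t : ι → ℝ) (x v : H) :
    form b₀ b t x v = b₀ x v + ∑ i, t i * b i x v := by
  simp [form]

theorem isCoercive_form {c : ℝ} (hc : 0 < c) {t : ι → ℝ}
    (hcoer : ∀ v, c * ‖v‖ ^ 2 ≤ b₀ v v + ∑ i, t i * b i v v) : IsCoercive (form b₀ b t) :=
  ⟨c, hc, fun v ↦ by simpa [sq, mul_assoc] using hcoer v⟩

variable [DecidableEq ι]

theorem hasFDerivAt_form (t : ι → ℝ) :
    HasFDerivAt (form b₀ b) ((ContinuousLinearEquiv.piRing (𝕜 := ℝ) ι).symm b) t :=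
  hasFDerivAt_const_add_sum_smul b₀ b t

variable (b₀ b) (ℓ₀ : H →L[ℝ] ℝ) (ℓ : ι → H →L[ℝ] ℝ)

/-- `load ℓ₀ ℓ α` is the `α`-th partial derivative of `t ↦ ℓ₀ + ∑ i, t i • ℓ i`. -/
def load (α : ι → ℕ) (t : ι → ℝ) : H →L[ℝ] ℝ :=
  (if α = 0 then ℓ₀ + ∑ i, t i • ℓ i else 0) + ∑ i, if α = Pi.single i 1 then ℓ i else 0

/-- The guard `α j = 0` only makes the recursion terminate; `solution_eq` removes it. -/
def solution (α : ι → ℕ) (t : ι → ℝ) : H :=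
  (form b₀ b t).inverse (load ℓ₀ ℓ α t -
    ∑ j, if h : α j = 0 then 0 else (α j : ℝ) • b j (solution (α - Pi.single j 1) t))
termination_by ∑ i, α i
decreasing_by exact Pi.sum_tsub_single_one_lt h

def rhs (α : ι → ℕ) (t : ι → ℝ) : H →L[ℝ] ℝ :=
  load ℓ₀ ℓ α t - ∑ j, (α j : ℝ) • b j (solution b₀ b ℓ₀ ℓ (α - Pi.single j 1) t)

variable {b₀ b ℓ₀ ℓ}

theorem load_add_single_one (α : ι → ℕ) (i : ι) (t : ι → ℝ) :
    load ℓ₀ ℓ (α + Pi.single i 1) t = if α = 0 then ℓ i else 0 := by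
  have hne : α + Pi.single i 1 ≠ 0 := fun h ↦ by simpa using congrFun h i
  simp only [load, if_neg hne, Pi.add_single_one_eq_single_one_iff, zero_add]
  by_cases hα : α = 0 <;> simp [hα]

theorem hasFDerivAt_load (α : ι → ℕ) (t : ι → ℝ) :
    HasFDerivAt (load ℓ₀ ℓ α)
      ((ContinuousLinearEquiv.piRing (𝕜 := ℝ) ι).symm fun i ↦
        load ℓ₀ ℓ (α + Pi.single i 1) t) t := by
  simp only [load_add_single_one]
  by_cases hα : α = 0
  · have hload : load ℓ₀ ℓ α = fun s ↦ ℓ₀ + ∑ i, s i • ℓ i := by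
      funext s; simp [load, hα, eq_comm (a := (0 : ι → ℕ))]
    rw [hload]
    simpa [hα] using hasFDerivAt_const_add_sum_smul ℓ₀ ℓ t
  · have hload : load ℓ₀ ℓ α = fun _ ↦ load ℓ₀ ℓ α t := by
      funext s; simp [load, hα]
    rw [hload]
    simpa [hα, ← Pi.zero_def] using hasFDerivAt_const (load ℓ₀ ℓ α t) t

theorem rhs_zero_apply (t : ι → ℝ) (v : H) :
    rhs b₀ b ℓ₀ ℓ 0 t v = ℓ₀ v + ∑ i, t i * ℓ i v := by
  simp [rhs, load, eq_comm (a := (0 : ι → ℕ))]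

theorem rhs_apply {α : ι → ℕ} (hα : α ≠ 0) (t : ι → ℝ) (v : H) :
    rhs b₀ b ℓ₀ ℓ α t v = (∑ i, if α = Pi.single i 1 then ℓ i v else 0) -
      ∑ j, (α j : ℝ) * b j (solution b₀ b ℓ₀ ℓ (α - Pi.single j 1) t) v := by
  simp [rhs, load, hα, DFunLike.ite_apply]

theorem solution_eq (α : ι → ℕ) (t : ι → ℝ) :
    solution b₀ b ℓ₀ ℓ α t = (form b₀ b t).inverse (rhs b₀ b ℓ₀ ℓ α t) := by
  rw [solution, rhs]
  congr 2
  refine Finset.sum_congr rfl fun j _ ↦ ?_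
  split_ifs with h <;> simp [h]

theorem eq_solution_iff {t : ι → ℝ} (ht : (form b₀ b t).IsInvertible) {α : ι → ℕ} {x : H} :
    x = solution b₀ b ℓ₀ ℓ α t ↔ form b₀ b t x = rhs b₀ b ℓ₀ ℓ α t := by
  rw [solution_eq, eq_comm, ht.inverse_apply_eq, eq_comm]

theorem hasFDerivAt_solution [CompleteSpace H] (α : ι → ℕ) {t : ι → ℝ}
    (ht : (form b₀ b t).IsInvertible) :
    HasFDerivAt (solution b₀ b ℓ₀ ℓ α)
      ((ContinuousLinearEquiv.piRing (𝕜 := ℝ) ι).symm fun i ↦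
        solution b₀ b ℓ₀ ℓ (α + Pi.single i 1) t) t := by
  induction α using solution.induct with
  | _ α ih =>
    have hterm : ∀ j, HasFDerivAt
        (fun s ↦ (α j : ℝ) • b j (solution b₀ b ℓ₀ ℓ (α - Pi.single j 1) s))
        ((ContinuousLinearEquiv.piRing (𝕜 := ℝ) ι).symm fun i ↦
          (α j : ℝ) • b j (solution b₀ b ℓ₀ ℓ (α - Pi.single j 1 + Pi.single i 1) t)) t := by
      intro j
      by_cases hj : α j = 0
      · simpa [hj, ← Pi.zero_def] using hasFDerivAt_const (0 : H →L[ℝ] ℝ) t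
      · exact (((α j : ℝ) • b j).hasFDerivAt.comp t (ih j hj)).congr_fderiv
          (eq_piRing_symm_iff.2 fun i ↦ by simp)
    have hrhs : HasFDerivAt (rhs b₀ b ℓ₀ ℓ α)
        ((ContinuousLinearEquiv.piRing (𝕜 := ℝ) ι).symm fun i ↦ load ℓ₀ ℓ (α + Pi.single i 1) t -
          ∑ j, (α j : ℝ) • b j (solution b₀ b ℓ₀ ℓ (α - Pi.single j 1 + Pi.single i 1) t)) t := by
      exact ((hasFDerivAt_load α t).sub (HasFDerivAt.fun_sum fun j _ ↦ hterm j)).congr_fderiv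
        (eq_piRing_symm_iff.2 fun i ↦ by simp)
    have hsol := (hasFDerivAt_form t).inverse_apply ht hrhs
    simp only [← solution_eq] at hsol
    refine hsol.congr_fderiv (eq_piRing_symm_iff.2 fun i ↦ ?_)
    rw [solution_eq (α + Pi.single i 1), rhs,
      Pi.sum_natCast_smul_add_single_one (fun j β ↦ b j (solution b₀ b ℓ₀ ℓ β t))]
    simp [sub_sub]

end ParametricLaxMilgram

end

theorem parametric_solution_map_higher_order_derivatives_general
    {H : Type*} [NormedAddCommGroup H] [InnerProductSpace ℝ H] [CompleteSpace H]
    {N : ℕ}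
    (b0 : H →L[ℝ] H →L[ℝ] ℝ) (b : Fin N → H →L[ℝ] H →L[ℝ] ℝ)
    (l0 : H →L[ℝ] ℝ) (l : Fin N → H →L[ℝ] ℝ)
    (c : ℝ) (hc : 0 < c)
    (U : Set (Fin N → ℝ))
    (hcoer : ∀ t ∈ U, ∀ v : H, c * ‖v‖ ^ 2 ≤ b0 v v + ∑ i, t i * b i v v)
    (u : (Fin N → ℝ) → H)
    (hu : ∀ t ∈ U, ∀ v : H,
      b0 (u t) v + ∑ i, t i * b i (u t) v = l0 v + ∑ i, t i * l i v) :
    ∃ w : (Fin N → ℕ) → (Fin N → ℝ) → H,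
      (∀ t ∈ U, w 0 t = u t) ∧
      (∀ α : Fin N → ℕ, α ≠ 0 → ∀ t ∈ U,
        (∀ v : H,
          b0 (w α t) v + ∑ j, t j * b j (w α t) v
            = (∑ i, if α = Pi.single i 1 then l i v else 0)
              - ∑ j, (α j : ℝ) * b j (w (α - Pi.single j 1) t) v) ∧
        (∀ w' : H,
          (∀ v : H,
            b0 w' v + ∑ j, t j * b j w' v
              = (∑ i, if α = Pi.single i 1 then l i v else 0)
                - ∑ j, (α j : ℝ) * b j (w (α - Pi.single j 1) t) v) →
          w' = w α t)) ∧
      (∀ α : Fin N → ℕ, ∀ t ∈ U,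
        DifferentiableAt ℝ (w α) t ∧
        ∀ i : Fin N, fderiv ℝ (w α) t (Pi.single i 1) = w (α + Pi.single i 1) t) := by
  open ParametricLaxMilgram in
  have hinv : ∀ t ∈ U, (form b0 b t).IsInvertible := fun t ht ↦
    (isCoercive_form hc (hcoer t ht)).isInvertible
  refine ⟨solution b0 b l0 l, fun t ht ↦ ?_, fun α hα t ht ↦ ?_, fun α t ht ↦ ?_⟩
  · rw [eq_comm, eq_solution_iff (hinv t ht)]
    ext v
    simpa [rhs_zero_apply] using hu t ht v
  · simp only [← form_apply_apply, ← rhs_apply hα, ← ContinuousLinearMap.ext_iff,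
      ← eq_solution_iff (hinv t ht), imp_self, implies_true, and_self]
  · have h := hasFDerivAt_solution (ℓ₀ := l0) (ℓ := l) α (hinv t ht)
    exact ⟨h.differentiableAt, fun i ↦ by
      rw [h.fderiv, ContinuousLinearEquiv.piRing_symm_apply_single]⟩

/-- Abstract form of the differentiated equations (2.14)–(2.15), higher
order: under coercivity on an open set `U ⊇ [0,1]^N`, the recursively defined family
`w_α` is well defined (`w_0 = u`, and for `|α| ≥ 1` the element `w_α(t)` is the unique
solution of `a_t(w_α, v) = ℓ_α(v) − ∑ⱼ αⱼ bⱼ(w_{α−eⱼ}(t), v)`, where `ℓ_α = ℓᵢ` if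
`α = eᵢ` and `ℓ_α = 0` for `|α| ≥ 2`), the solution map has partial derivatives of all
orders on `U`, and `∂_t^α u = w_α` on `U`. -/
theorem parametric_solution_map_higher_order_derivatives
    {H : Type*} [NormedAddCommGroup H] [InnerProductSpace ℝ H] [CompleteSpace H]
    {N : ℕ} (hN : 1 ≤ N)
    (b0 : H →L[ℝ] H →L[ℝ] ℝ) (b : Fin N → H →L[ℝ] H →L[ℝ] ℝ)
    (l0 : H →L[ℝ] ℝ) (l : Fin N → H →L[ℝ] ℝ)
    (c : ℝ) (hc : 0 < c)
    (U : Set (Fin N → ℝ)) (hUopen : IsOpen U)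
    (hU : {s : Fin N → ℝ | ∀ i, s i ∈ Set.Icc (0 : ℝ) 1} ⊆ U)
    (hcoer : ∀ t ∈ U, ∀ v : H, c * ‖v‖ ^ 2 ≤ b0 v v + ∑ i, t i * b i v v)
    (u : (Fin N → ℝ) → H)
    (hu : ∀ t ∈ U, ∀ v : H,
      b0 (u t) v + ∑ i, t i * b i (u t) v = l0 v + ∑ i, t i * l i v) :
    ∃ w : (Fin N → ℕ) → (Fin N → ℝ) → H,
      (∀ t ∈ U, w 0 t = u t) ∧
      (∀ α : Fin N → ℕ, α ≠ 0 → ∀ t ∈ U,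
        (∀ v : H,
          b0 (w α t) v + ∑ j, t j * b j (w α t) v
            = (∑ i, if α = Pi.single i 1 then l i v else 0)
              - ∑ j, (α j : ℝ) * b j (w (α - Pi.single j 1) t) v) ∧
        (∀ w' : H,
          (∀ v : H,
            b0 w' v + ∑ j, t j * b j w' v
              = (∑ i, if α = Pi.single i 1 then l i v else 0)
                - ∑ j, (α j : ℝ) * b j (w (α - Pi.single j 1) t) v) →
          w' = w α t)) ∧
      (∀ α : Fin N → ℕ, ∀ t ∈ U,
        DifferentiableAt ℝ (w α) t ∧
        ∀ i : Fin N, fderiv ℝ (w α) t (Pi.single i 1) = w (α + Pi.single i 1) t) :=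
  parametric_solution_map_higher_order_derivatives_general b0 b l0 l c hc U hcoer u hu
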